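/- arXiv:2405.00511 — 3 statements merged into one kernel-verified Lean document; each statement's English description precedes it below -/
import Mathlib

section
/- With M as above (the symmetric (n+2)×(n+2) matrix with parameters a,b,c,d,e,f), any real eigenvalue λ of M that is not equal to -a is an eigenvalue of the 3×3 matrix R = [[(n-1)a, b, c],[n·b, d, f],[n·c, f, e]]. Conversely, every eigenvalue of R is an eigenvalue of M. -/
/-!
Let `π` send `0, …, n-1` to block `0`, `n` to block `1` and `n+1` to block `2`. Then
`M + a • 1` is constant on blocks: `M = C.submatrix π π - a • 1` with
`C = !![a, b, c; b, d + a, f; c, f, e + a]`. If `P` is the `0/1` incidence matrix of `π`, then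
`PᵀP = diagonal ![n, 1, 1]`, hence `M * P = P * R`, so every eigenvector `v` of `R` lifts to the
eigenvector `P *ᵥ v = v ∘ π` of `M`. Since `M` is symmetric, also `Pᵀ * M = Rᵀ * Pᵀ`: for an
eigenvector `w` of `M` the block sums `Pᵀ *ᵥ w` form an eigenvector of `Rᵀ`, which has the same
eigenvalues as `R`, unless they vanish; but then `M *ᵥ w = -a • w`.
-/

open Module.End Matrix Finset

namespace Matrix

variable {ι κ K : Type*} [CommRing K]

section Eigenvalues

variable [Fintype ι] [DecidableEq ι]

lemma hasEigenvalue_toLin'_iff {A : Matrix ι ι K} {μ : K} :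
    HasEigenvalue (toLin' A) μ ↔ ∃ v, v ≠ 0 ∧ A *ᵥ v = μ • v := by
  simp only [hasEigenvalue_iff, Submodule.ne_bot_iff, mem_eigenspace_iff, toLin'_apply]
  exact exists_congr fun v => and_comm

lemma hasEigenvalue_toLin'_transpose_iff [IsDomain K] {A : Matrix ι ι K} {μ : K} :
    HasEigenvalue (toLin' Aᵀ) μ ↔ HasEigenvalue (toLin' A) μ := by
  rw [hasEigenvalue_iff_isRoot_charpoly, hasEigenvalue_iff_isRoot_charpoly, charpoly_toLin',
    charpoly_toLin', charpoly_transpose]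

lemma hasEigenvalue_toLin'_of_mul_eq_mul [Fintype κ] {A : Matrix ι ι K} {B : Matrix κ κ K}
    {X : Matrix ι κ K} (hAX : A * X = X * B) {μ : K} {v : κ → K} (hv : B *ᵥ v = μ • v)
    (hXv : X *ᵥ v ≠ 0) : HasEigenvalue (toLin' A) μ :=
  hasEigenvalue_toLin'_iff.2
    ⟨X *ᵥ v, hXv, by rw [mulVec_mulVec, hAX, ← mulVec_mulVec, hv, mulVec_smul]⟩

end Eigenvalues

section FiberMatrix

variable [DecidableEq κ]

variable (K) in
def fiberMatrix (π : ι → κ) : Matrix ι κ K := (1 : Matrix κ κ K).submatrix π id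

variable (π : ι → κ)

lemma fiberMatrix_mulVec [Fintype κ] (v : κ → K) : fiberMatrix K π *ᵥ v = v ∘ π := by
  ext i
  simp [fiberMatrix, mulVec, dotProduct, Matrix.one_apply]

lemma submatrix_eq_fiberMatrix_mul_mul_transpose [Fintype κ] (C : Matrix κ κ K) :
    C.submatrix π π = fiberMatrix K π * C * (fiberMatrix K π)ᵀ := by
  ext i j
  simp [fiberMatrix, mul_apply, Matrix.one_apply]

lemma transpose_fiberMatrix_mul_self [Fintype ι] :
    (fiberMatrix K π)ᵀ * fiberMatrix K π = diagonal fun k => (#{i | π i = k} : K) := by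
  ext k l
  simp only [fiberMatrix, mul_apply, transpose_apply, submatrix_apply, id, Matrix.one_apply,
    boole_mul, ← ite_and, sum_boole, diagonal_apply]
  by_cases hkl : k = l
  · simp [hkl]
  · rw [if_neg hkl, filter_eq_empty_iff.2 fun j _ h => hkl (h.1.symm.trans h.2), card_empty,
      Nat.cast_zero]

end FiberMatrix

section Quotient

variable [Fintype ι] [Fintype κ] [DecidableEq ι] [DecidableEq κ] (π : ι → κ) (C : Matrix κ κ K)
  (s : K)

/-- Entry `(k, l)` is the sum of the entries of `C.submatrix π π + s • 1` in any row of block `k`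
and the columns of block `l`. -/
def quotientMatrix : Matrix κ κ K := C * diagonal (fun k => (#{i | π i = k} : K)) + s • 1

lemma submatrix_add_smul_one_mul_fiberMatrix :
    (C.submatrix π π + s • 1) * fiberMatrix K π = fiberMatrix K π * quotientMatrix π C s := by
  rw [submatrix_eq_fiberMatrix_mul_mul_transpose, quotientMatrix, Matrix.add_mul, Matrix.mul_add,
    Matrix.mul_assoc, Matrix.mul_assoc, transpose_fiberMatrix_mul_self, ← Matrix.mul_assoc,
    smul_mul, Matrix.one_mul, Matrix.mul_smul, Matrix.mul_one]

variable {π C s}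

theorem hasEigenvalue_of_hasEigenvalue_quotientMatrix (hπ : Function.Surjective π) {μ : K}
    (hμ : HasEigenvalue (toLin' (quotientMatrix π C s)) μ) :
    HasEigenvalue (toLin' (C.submatrix π π + s • 1)) μ := by
  obtain ⟨v, hv0, hv⟩ := hasEigenvalue_toLin'_iff.1 hμ
  refine hasEigenvalue_toLin'_of_mul_eq_mul (submatrix_add_smul_one_mul_fiberMatrix π C s) hv ?_
  rw [fiberMatrix_mulVec]
  refine fun hvπ => hv0 (funext fun k => ?_)
  obtain ⟨i, rfl⟩ := hπ k
  exact congrFun hvπ i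

theorem hasEigenvalue_quotientMatrix_of_hasEigenvalue [IsDomain K] (hC : C.IsSymm) {μ : K}
    (hμs : μ ≠ s) (hμ : HasEigenvalue (toLin' (C.submatrix π π + s • 1)) μ) :
    HasEigenvalue (toLin' (quotientMatrix π C s)) μ := by
  obtain ⟨w, hw0, hw⟩ := hasEigenvalue_toLin'_iff.1 hμ
  rw [← hasEigenvalue_toLin'_transpose_iff]
  have hsymm : (C.submatrix π π + s • 1)ᵀ = C.submatrix π π + s • 1 := by
    rw [transpose_add, transpose_submatrix, hC, transpose_smul, transpose_one]
  have hPt : (fiberMatrix K π)ᵀ * (C.submatrix π π + s • 1) =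
      (quotientMatrix π C s)ᵀ * (fiberMatrix K π)ᵀ := by
    rw [← hsymm, ← transpose_mul, submatrix_add_smul_one_mul_fiberMatrix, transpose_mul]
  refine hasEigenvalue_toLin'_of_mul_eq_mul hPt.symm hw fun hPw => hμs ?_
  have hsw : (C.submatrix π π + s • 1) *ᵥ w = s • w := by
    rw [add_mulVec, submatrix_eq_fiberMatrix_mul_mul_transpose, ← mulVec_mulVec, hPw, mulVec_zero,
      zero_add, smul_mulVec, one_mulVec]
  exact smul_left_injective K hw0 (hw.symm.trans hsw)

end Quotient

end Matrix

def threeCells (n : ℕ) (i : Fin (n + 2)) : Fin 3 :=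
  if i.val < n then 0 else if i.val = n then 1 else 2

lemma threeCells_eq_zero_iff {n : ℕ} {i : Fin (n + 2)} : threeCells n i = 0 ↔ i.val < n := by
  unfold threeCells
  split_ifs <;> simp [*]

lemma threeCells_eq_one_iff {n : ℕ} {i : Fin (n + 2)} :
    threeCells n i = 1 ↔ i = ⟨n, Nat.lt_add_of_pos_right two_pos⟩ := by
  unfold threeCells
  split_ifs <;> simp [Fin.ext_iff, *]
  omega

lemma threeCells_eq_two_iff {n : ℕ} {i : Fin (n + 2)} :
    threeCells n i = 2 ↔ i = ⟨n + 1, (n + 1).lt_add_one⟩ := by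
  unfold threeCells
  split_ifs <;> simp [Fin.ext_iff, *] <;> omega

lemma threeCells_surjective {n : ℕ} (hn : 0 < n) : Function.Surjective (threeCells n) := by
  intro k
  fin_cases k
  · exact ⟨⟨0, by omega⟩, threeCells_eq_zero_iff.2 hn⟩
  · exact ⟨_, threeCells_eq_one_iff.2 rfl⟩
  · exact ⟨_, threeCells_eq_two_iff.2 rfl⟩

lemma card_threeCells (n : ℕ) :
    (fun k => (#{i | threeCells n i = k} : ℝ)) = ![(n : ℝ), 1, 1] := by
  funext k
  fin_cases k
  · simp [threeCells_eq_zero_iff, Fin.card_filter_val_lt]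
  · simp [threeCells_eq_one_iff, filter_eq']
  · simp [threeCells_eq_two_iff, filter_eq']

lemma Fin.val_lt_or_eq_or_eq {n : ℕ} (i : Fin (n + 2)) :
    i.val < n ∨ i = ⟨n, Nat.lt_add_of_pos_right two_pos⟩ ∨ i = ⟨n + 1, (n + 1).lt_add_one⟩ := by
  simp only [Fin.ext_iff]
  omega

theorem reduced_matrix_eigenvalues (n : ℕ) (hn : 2 ≤ n)
    (a b c d e f : ℝ)
    (M : Matrix (Fin (n + 2)) (Fin (n + 2)) ℝ)
    (hoff : ∀ i j : Fin (n + 2), i.val < n → j.val < n → i ≠ j → M i j = a)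
    (hdiag : ∀ i : Fin (n + 2), i.val < n → M i i = 0)
    (hcolb : ∀ i : Fin (n + 2), i.val < n →
      M i ⟨n, by omega⟩ = b ∧ M ⟨n, by omega⟩ i = b)
    (hcolc : ∀ i : Fin (n + 2), i.val < n →
      M i ⟨n + 1, by omega⟩ = c ∧ M ⟨n + 1, by omega⟩ i = c)
    (hdd : M ⟨n, by omega⟩ ⟨n, by omega⟩ = d)
    (hee : M ⟨n + 1, by omega⟩ ⟨n + 1, by omega⟩ = e)
    (hff : M ⟨n, by omega⟩ ⟨n + 1, by omega⟩ = f ∧ M ⟨n + 1, by omega⟩ ⟨n, by omega⟩ = f)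
    (R : Matrix (Fin 3) (Fin 3) ℝ)
    (hR : R = !![((n : ℝ) - 1) * a, b, c; (n : ℝ) * b, d, f; (n : ℝ) * c, f, e]) :
    (∀ μ : ℝ, HasEigenvalue (Matrix.toLin' M) μ → μ ≠ -a →
      HasEigenvalue (Matrix.toLin' R) μ) ∧
    (∀ μ : ℝ, HasEigenvalue (Matrix.toLin' R) μ →
      HasEigenvalue (Matrix.toLin' M) μ) := by
  set C : Matrix (Fin 3) (Fin 3) ℝ := !![a, b, c; b, d + a, f; c, f, e + a]
  have hM : M = C.submatrix (threeCells n) (threeCells n) + (-a) • 1 := by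
    ext i j
    rw [Matrix.add_apply, submatrix_apply, Matrix.smul_apply, Matrix.one_apply]
    rcases Fin.val_lt_or_eq_or_eq i with hi | rfl | rfl <;>
      rcases Fin.val_lt_or_eq_or_eq j with hj | rfl | rfl
    · by_cases hij : i = j
      · subst hij
        simp [C, threeCells, hi, hdiag i hi]
      · simp [C, threeCells, hi, hj, hij, hoff i j hi hj hij]
    all_goals simp [C, threeCells, Fin.ext_iff, *]
    all_goals omega
  have hQ : quotientMatrix (threeCells n) C (-a) = R := by
    rw [quotientMatrix, card_threeCells, hR]
    ext k l
    rw [Matrix.add_apply, mul_diagonal, Matrix.smul_apply, Matrix.one_apply]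
    fin_cases k <;> fin_cases l <;> simp [C] <;> ring
  have hC : C.IsSymm := by
    ext k l
    fin_cases k <;> fin_cases l <;> rfl
  rw [hM, ← hQ]
  exact ⟨fun μ hμ hμa => hasEigenvalue_quotientMatrix_of_hasEigenvalue hC hμa hμ,
    fun μ => hasEigenvalue_of_hasEigenvalue_quotientMatrix (threeCells_surjective (by omega))⟩
end

section
/- The 4×4 real symmetric matrix H = [[0,1,2,2],[1,0,2,2],[2,2,6,8],[2,2,8,8]] has exactly one positive eigenvalue; its eigenvalues are (3/2)(5+√33), -(3/2)(√33-5), -1, and 0. -/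
/-!
The characteristic polynomial of `H` is `X (X + 1) (X² - 15 X - 18)`, and the roots of the
quadratic factor are `(15 ± 3√33) / 2`. Since `√33 > 5`, exactly one of them is positive.
-/

open Polynomial

def hessianL2 : Matrix (Fin 4) (Fin 4) ℝ :=
  !![0, 1, 2, 2; 1, 0, 2, 2; 2, 2, 6, 8; 2, 2, 8, 8]

theorem charpoly_hessianL2 :
    hessianL2.charpoly = X ^ 4 - 14 * X ^ 3 - 33 * X ^ 2 - 18 * X := by
  simp [Matrix.charpoly, Matrix.det_succ_row_zero, Fin.sum_univ_succ, Fin.succAbove, hessianL2,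
    Matrix.charmatrix_apply, map_ofNat]
  ring

theorem X_sub_C_mul_X_sub_C {R : Type*} [CommRing R] {a b s p : R} (hs : a + b = s)
    (hp : a * b = p) : (X - C a) * (X - C b) = X ^ 2 - C s * X + C p := by
  subst hs hp
  simp only [map_add, map_mul]
  ring

theorem hessian_L2_eigenvalues :
    let H : Matrix (Fin 4) (Fin 4) ℝ :=
      !![0, 1, 2, 2; 1, 0, 2, 2; 2, 2, 6, 8; 2, 2, 8, 8]
    let l : Multiset ℝ :=
      {(3 / 2) * (5 + Real.sqrt 33), -((3 / 2) * (Real.sqrt 33 - 5)), -1, 0}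
    H.charpoly = (l.map fun r => X - C r).prod ∧
      l.countP (fun r => 0 < r) = 1 := by
  intro H l
  have hl : l = (3 / 2) * (5 + √33) ::ₘ -((3 / 2) * (√33 - 5)) ::ₘ -1 ::ₘ 0 ::ₘ 0 := rfl
  have h33 : √33 ^ 2 = 33 := Real.sq_sqrt (by norm_num)
  have h5 : 5 < √33 := by nlinarith [Real.sqrt_nonneg 33]
  constructor
  · have hquadratic : (X - C ((3 / 2) * (5 + √33))) * (X - C (-((3 / 2) * (√33 - 5))))
        = X ^ 2 - C 15 * X + C (-18) :=
      X_sub_C_mul_X_sub_C (by ring) (by linear_combination (-9 / 4) * h33)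
    change hessianL2.charpoly = _
    simp only [charpoly_hessianL2, hl, Multiset.map_cons, Multiset.prod_cons, Multiset.map_zero,
      Multiset.prod_zero, ← mul_assoc]
    rw [hquadratic]
    simp only [map_ofNat, map_neg, map_one, map_zero]
    ring
  · have hpos : 0 < (3 / 2) * (5 + √33) := by positivity
    have hneg : ¬ 0 < -((3 / 2) * (√33 - 5)) := by linarith
    simp only [hl, Multiset.countP_cons, Multiset.countP_zero, if_pos hpos, if_neg hneg]
    norm_num
end

section
/- For n ≥ 1, the support of the polynomial x·y^{n-1} + ∏_{i=1}^n (x + x_i + y) in variables x, y, x_1, ..., x_n equals the support of ∏_{i=1}^n (x + x_i + y). -/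
/-!
All coefficients of `∏ (x + xᵢ + y)` are nonnegative, as polynomials with nonnegative coefficients
form a subsemiring. Choosing `x` from the first factor and `y` from the remaining `n - 1` factors
shows that the coefficient of `x y^(n-1)` in the product is at least `1`. Adding the monomial
`x y^(n-1)` therefore only increases an already positive coefficient and leaves the support unchanged.
-/

open MvPolynomial

namespace MvPolynomial

section NonnegCoeffs

variable {σ R : Type*} [CommSemiring R] [PartialOrder R] [IsOrderedRing R]

variable (σ R) in
def nonnegCoeffs : Subsemiring (MvPolynomial σ R) where
  carrier := {p | ∀ d, 0 ≤ coeff d p}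
  mul_mem' {p q} hp hq d := by
    classical
    rw [coeff_mul]
    exact Finset.sum_nonneg fun e _ => mul_nonneg (hp _) (hq _)
  one_mem' d := by
    classical
    rw [coeff_one]
    split_ifs
    exacts [zero_le_one, le_rfl]
  add_mem' {p q} hp hq d := by
    rw [coeff_add]
    exact add_nonneg (hp d) (hq d)
  zero_mem' _ := le_rfl

theorem X_mem_nonnegCoeffs (i : σ) : X i ∈ nonnegCoeffs σ R := fun d => by
  classical
  rw [coeff_X]
  split_ifs
  exacts [zero_le_one, le_rfl]

theorem coeff_mul_le_coeff_add_mul {p q : MvPolynomial σ R} (hp : p ∈ nonnegCoeffs σ R)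
    (hq : q ∈ nonnegCoeffs σ R) (a b : σ →₀ ℕ) :
    coeff a p * coeff b q ≤ coeff (a + b) (p * q) := by
  classical
  rw [coeff_mul]
  exact Finset.single_le_sum (f := fun e => coeff e.1 p * coeff e.2 q) (a := (a, b))
    (fun e _ => mul_nonneg (hp _) (hq _)) (Finset.HasAntidiagonal.mem_antidiagonal.2 rfl)

theorem prod_coeff_le_coeff_sum_prod {ι : Type*} {s : Finset ι} {f : ι → MvPolynomial σ R}
    (hf : ∀ i ∈ s, f i ∈ nonnegCoeffs σ R) (g : ι → σ →₀ ℕ) :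
    ∏ i ∈ s, coeff (g i) (f i) ≤ coeff (∑ i ∈ s, g i) (∏ i ∈ s, f i) := by
  induction s using Finset.cons_induction with
  | empty => simp
  | cons i s hi ih =>
    rw [Finset.forall_mem_cons] at hf
    rw [Finset.prod_cons, Finset.prod_cons, Finset.sum_cons]
    calc coeff (g i) (f i) * ∏ j ∈ s, coeff (g j) (f j)
        ≤ coeff (g i) (f i) * coeff (∑ j ∈ s, g j) (∏ j ∈ s, f j) :=
          mul_le_mul_of_nonneg_left (ih hf.2) (hf.1 _)
      _ ≤ coeff (g i + ∑ j ∈ s, g j) (f i * ∏ j ∈ s, f j) :=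
          coeff_mul_le_coeff_add_mul hf.1 (Subsemiring.prod_mem _ hf.2) _ _

end NonnegCoeffs

theorem support_monomial_add_of_coeff_pos {σ R : Type*} [CommSemiring R] [PartialOrder R]
    [IsStrictOrderedRing R] {p : MvPolynomial σ R} {m : σ →₀ ℕ} {c : R} (hc : 0 ≤ c)
    (hm : 0 < coeff m p) : (monomial m c + p).support = p.support := by
  classical
  ext d
  simp only [mem_support_iff, coeff_add, coeff_monomial]
  split_ifs with h
  · subst h
    exact iff_of_true (add_pos_of_nonneg_of_pos hc hm).ne' hm.ne'
  · rw [zero_add]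

end MvPolynomial

theorem support_p_eq_support_product (n : ℕ) (hn : 1 ≤ n) :
    let x : MvPolynomial (Fin (n + 2)) ℝ := X 0
    let y : MvPolynomial (Fin (n + 2)) ℝ := X 1
    (x * y ^ (n - 1) + ∏ i : Fin n, (x + X i.succ.succ + y)).support
      = (∏ i : Fin n, (x + X i.succ.succ + y)).support := by
  obtain ⟨k, rfl⟩ := Nat.exists_eq_add_of_le' hn
  dsimp only
  set f : Fin (k + 1) → MvPolynomial (Fin (k + 1 + 2)) ℝ := fun i => X 0 + X i.succ.succ + X 1
  have hf : ∀ i ∈ Finset.univ, f i ∈ nonnegCoeffs _ ℝ := fun i _ =>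
    add_mem (add_mem (X_mem_nonnegCoeffs _) (X_mem_nonnegCoeffs _)) (X_mem_nonnegCoeffs _)
  let g : Fin (k + 1) → Fin (k + 1 + 2) →₀ ℕ :=
    Fin.cons (Finsupp.single 0 1) fun _ => Finsupp.single 1 1
  have hg : ∑ i, g i = Finsupp.single 0 1 + Finsupp.single 1 k := by
    simp [g, Fin.sum_univ_succ]
  have hcoeff : ∀ i, coeff (g i) (f i) = 1 := by
    intro i
    cases i using Fin.cases <;> simp [g, f, coeff_X, Finsupp.single_left_inj, Fin.ext_iff, Nat.mod_eq_of_lt]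
  have hxy : (X 0 * X 1 ^ (k + 1 - 1) : MvPolynomial (Fin (k + 1 + 2)) ℝ) =
      monomial (Finsupp.single 0 1 + Finsupp.single 1 k) 1 := by
    rw [Nat.add_sub_cancel, X_pow_eq_monomial, X, monomial_mul, one_mul]
  rw [hxy]
  refine support_monomial_add_of_coeff_pos zero_le_one ?_
  calc 0 < ∏ i, coeff (g i) (f i) := by simp [hcoeff]
    _ ≤ _ := hg ▸ prod_coeff_le_coeff_sum_prod hf g
end
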